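/- For every measurable set E ⊆ ℝⁿ, the measure theoretic boundary is the intersection of the topological boundaries of all measurable representatives of E: ∂⁻E = ⋂ {∂F : F ⊆ ℝⁿ measurable with |E Δ F| = 0}, where ∂F denotes the topological boundary and Δ the symmetric difference. -/

import Mathlib

open MeasureTheory Metric Set Filter
open scoped ENNReal Topology

/-- The measure theoretic boundary `∂⁻E`. Note `volume (ball x r) = ω_n rⁿ`. -/
def mtb (n : ℕ) (E : Set (EuclideanSpace ℝ (Fin n))) : Set (EuclideanSpace ℝ (Fin n)) :=
  {x | ∀ r > (0 : ℝ), 0 < volume (E ∩ ball x r) ∧ volume (E ∩ ball x r) < volume (ball x r)}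

/-!
`∂⁻E` only sees `E` up to null sets, and a point of it is in the closure (every ball meets `E`
in positive measure) but not in the interior (no ball is contained in `E` up to a null set) of
every representative; so `∂⁻E ⊆ ∂F` for each representative `F`. Conversely, if some ball
`B = B_r(x)` meets `E` in a null set, `x` is not in the closure of the representative `E \ B`;
if `B ⊆ E` up to a null set, `x` is in the interior of the representative `E ∪ B`.
-/

theorem Metric.notMem_closure_sdiff_ball {α : Type*} [PseudoMetricSpace α] (E : Set α) {x : α}
    {r : ℝ} (hr : 0 < r) : x ∉ closure (E \ ball x r) := fun hx =>
  have ⟨_, hyE, hyx⟩ := Metric.mem_closure_iff.mp hx r hr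
  hyE.2 (mem_ball_comm.mp hyx)

namespace MeasureTheory.Measure

variable {α : Type*} [PseudoMetricSpace α] [MeasurableSpace α] (μ : Measure α)

def measureBoundary (E : Set α) : Set α :=
  {x | ∀ r > (0 : ℝ), 0 < μ (E ∩ ball x r) ∧ μ (E ∩ ball x r) < μ (ball x r)}

variable {μ}

theorem measureBoundary_congr_ae {E F : Set α} (h : E =ᵐ[μ] F) :
    μ.measureBoundary E = μ.measureBoundary F := by
  ext x
  simp only [measureBoundary, mem_ofPred_eq, measure_congr (h.inter (ae_eq_refl (ball x _)))]

theorem measureBoundary_subset_frontier (F : Set α) : μ.measureBoundary F ⊆ frontier F := by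
  intro x hx
  constructor
  · refine Metric.mem_closure_iff.mpr fun r hr => ?_
    obtain ⟨y, hyF, hyx⟩ := nonempty_of_measure_ne_zero (hx r hr).1.ne'
    exact ⟨y, hyF, mem_ball'.mp hyx⟩
  · intro hxF
    obtain ⟨r, hr, hball⟩ := Metric.mem_nhds_iff.mp (mem_interior_iff_mem_nhds.mp hxF)
    have hlt := (hx r hr).2
    rw [inter_eq_self_of_subset_right hball] at hlt
    exact hlt.false

theorem exists_measurableSet_ae_eq_notMem_frontier [OpensMeasurableSpace α] [ProperSpace α]
    [IsFiniteMeasureOnCompacts μ] {E : Set α} (hE : MeasurableSet E) {x : α}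
    (hx : x ∉ μ.measureBoundary E) :
    ∃ F, MeasurableSet F ∧ F =ᵐ[μ] E ∧ x ∉ frontier F := by
  simp only [measureBoundary, mem_ofPred_eq, not_forall, not_and_or, not_lt,
    nonpos_iff_eq_zero] at hx
  obtain ⟨r, hr, hnull | hfull⟩ := hx
  · exact ⟨E \ ball x r, hE.diff measurableSet_ball, sdiff_ae_eq_self.mpr hnull,
      fun hxF => notMem_closure_sdiff_ball E hr hxF.1⟩
  · have hinter : (E ∩ ball x r : Set α) =ᵐ[μ] ball x r :=
      ae_eq_of_subset_of_measure_ge inter_subset_right hfull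
        (hE.inter measurableSet_ball).nullMeasurableSet measure_ball_lt_top.ne
    have hball : ball x r ≤ᵐ[μ] E := hinter.symm.le.trans inter_subset_left.eventuallyLE
    refine ⟨E ∪ ball x r, hE.union measurableSet_ball, union_ae_eq_left_iff_ae_subset.mpr hball,
      fun hxF => hxF.2 ?_⟩
    exact interior_maximal subset_union_right isOpen_ball (mem_ball_self hr)

end MeasureTheory.Measure

theorem mtb_eq_sInter_frontier_general (n : ℕ) (E : Set (EuclideanSpace ℝ (Fin n)))
    (hE : MeasurableSet E) :
    mtb n E = ⋂₀ {B : Set (EuclideanSpace ℝ (Fin n)) |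
      ∃ F : Set (EuclideanSpace ℝ (Fin n)), MeasurableSet F ∧
        volume ((E \ F) ∪ (F \ E)) = 0 ∧ B = frontier F} := by
  change volume.measureBoundary E = _
  ext x
  simp only [mem_sInter, mem_ofPred_eq, forall_exists_index, and_imp]
  constructor
  · rintro hx _ F - hEF rfl
    rw [Measure.measureBoundary_congr_ae (measure_symmDiff_eq_zero_iff.mp hEF)] at hx
    exact Measure.measureBoundary_subset_frontier F hx
  · intro hx
    by_contra hxE
    obtain ⟨F, hF, hFE, hxF⟩ := Measure.exists_measurableSet_ae_eq_notMem_frontier hE hxE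
    exact hxF (hx _ F hF (measure_symmDiff_eq_zero_iff.mpr hFE.symm) rfl)

/-- The measure theoretic boundary of a measurable set `E` is the
intersection of the topological boundaries of all measurable representatives of `E`. -/
theorem mtb_eq_sInter_frontier (n : ℕ) (hn : 1 ≤ n) (E : Set (EuclideanSpace ℝ (Fin n)))
    (hE : MeasurableSet E) :
    mtb n E = ⋂₀ {B : Set (EuclideanSpace ℝ (Fin n)) |
      ∃ F : Set (EuclideanSpace ℝ (Fin n)), MeasurableSet F ∧
        volume ((E \ F) ∪ (F \ E)) = 0 ∧ B = frontier F} :=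
  mtb_eq_sInter_frontier_general n E hE
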